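/- arXiv:1610.07636 — 4 statements merged into one kernel-verified Lean document; each statement's English description precedes it below -/
import Mathlib

section
/- Let 𝒳 be a finite set and P a probability mass function on 𝒳 with P(x) > 0 for all x ∈ 𝒳. Let X_1, X_2, … be i.i.d. with law P and let Q_n denote the empirical distribution of the first n samples. Then for every a with 0 < a < 1, lim_{n→∞} (1/n) · log Pr( d_TV(Q_n, P) > a ) = − inf { D(Q‖P) : Q a probability mass function on 𝒳 with d_TV(Q, P) > a }, provided the set {Q : d_TV(Q,P) > a} is nonempty. -/
open MeasureTheory ProbabilityTheory Filter

/-- Kullback–Leibler divergence between two pmfs on a finite set. -/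
noncomputable def klDivergence {𝒳 : Type*} [Fintype 𝒳] (Q P : 𝒳 → ℝ) : ℝ :=
  ∑ x, if 0 < Q x then Q x * Real.log (Q x / P x) else 0

/-- Total variation distance between two pmfs on a finite set. -/
noncomputable def tvDist {𝒳 : Type*} [Fintype 𝒳] (Q P : 𝒳 → ℝ) : ℝ :=
  (1 / 2) * ∑ x, |Q x - P x|

/-- The empirical distribution of the first `n` samples of `X`. -/
noncomputable def empiricalDist {Ω 𝒳 : Type*} [DecidableEq 𝒳] (X : ℕ → Ω → 𝒳)
    (n : ℕ) (ω : Ω) (x : 𝒳) : ℝ :=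
  (1 / (n : ℝ)) * ∑ i ∈ Finset.range n, if X i ω = x then (1 : ℝ) else 0

open Finset Real Topology

/-! The probability in question is the sum of `∏ i, P (v i)` over the sequences `v : Fin n → 𝒳`
whose type (empirical distribution) `T` satisfies `a < tvDist T P`. Since
`∏ i, P (v i) = (∏ i, T (v i)) * exp (-(n * D(T‖P)))`, each type class has probability at most
`exp (-(n * D(T‖P)))`, and there are at most `(n + 1) ^ |𝒳|` types: this is the upper bound.
For the lower bound fix `Q` with `a < tvDist Q P`. By Chebyshev's inequality the sequences whose
type is uniformly `δ`-close to `Q` carry at least half of the mass of `Q^n` once `n` is large;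
their types are still farther than `a` from `P`, and on them
`P^n ≥ Q^n * exp (-(n * (D(Q‖P) + δ * ∑ x, |log (Q x / P x)|)))`. -/

lemma sum_filter_le_sum_mul_div {ι : Type*} (s : Finset ι) {w g : ι → ℝ} (hw : ∀ i ∈ s, 0 ≤ w i)
    (hg : ∀ i ∈ s, 0 ≤ g i) {c : ℝ} (hc : 0 < c) :
    ∑ i ∈ s with c ≤ g i, w i ≤ (∑ i ∈ s, w i * g i) / c := by
  rw [le_div_iff₀ hc, sum_mul]
  calc ∑ i ∈ s with c ≤ g i, w i * c ≤ ∑ i ∈ s with c ≤ g i, w i * g i :=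
        sum_le_sum fun i hi => mul_le_mul_of_nonneg_left (mem_filter.1 hi).2
          (hw i (mem_filter.1 hi).1)
    _ ≤ ∑ i ∈ s, w i * g i :=
        sum_le_sum_of_subset_of_nonneg (filter_subset _ s) fun i hi _ =>
          mul_nonneg (hw i hi) (hg i hi)

section ProductWeights

variable {𝒳 : Type*} [Fintype 𝒳] {n : ℕ}

lemma sum_prod_le_one {Q : 𝒳 → ℝ} (hQ0 : ∀ x, 0 ≤ Q x) (hQ1 : ∑ x, Q x = 1)
    (s : Finset (Fin n → 𝒳)) : ∑ v ∈ s, ∏ i, Q (v i) ≤ 1 := by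
  calc ∑ v ∈ s, ∏ i, Q (v i) ≤ ∑ v : Fin n → 𝒳, ∏ i, Q (v i) :=
        sum_le_sum_of_subset_of_nonneg (subset_univ s) fun (v : Fin n → 𝒳) _ _ =>
          prod_nonneg fun i _ => hQ0 (v i)
    _ = 1 := by rw [← Fintype.sum_pow, hQ1, one_pow]

lemma sum_prod_mul_sum_sq {Q f : 𝒳 → ℝ} (hQ1 : ∑ x, Q x = 1) (hf : ∑ x, Q x * f x = 0) :
    ∑ v : Fin n → 𝒳, (∏ i, Q (v i)) * (∑ i, f (v i)) ^ 2 = n * ∑ x, Q x * f x ^ 2 := by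
  have hcross : ∀ i j : Fin n, ∑ v : Fin n → 𝒳, (∏ k, Q (v k)) * (f (v i) * f (v j)) =
      if i = j then ∑ x, Q x * f x ^ 2 else 0 := by
    intro i j
    -- as a product over the coordinates of `v`, the summand makes the sum over `v` factorize
    have hfactor : ∀ v : Fin n → 𝒳, (∏ k, Q (v k)) * (f (v i) * f (v j)) =
        ∏ k, Q (v k) * ((if k = i then f (v k) else 1) * (if k = j then f (v k) else 1)) := by
      intro v
      simp only [prod_mul_distrib, prod_ite_eq', mem_univ, if_true]
    simp_rw [hfactor]
    rw [← Fintype.prod_sum fun k x =>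
      Q x * ((if k = i then f x else 1) * (if k = j then f x else 1))]
    split_ifs with hij
    · subst hij
      rw [prod_eq_single i (fun k _ hk => by simp [hk, hQ1]) (by simp)]
      simp [sq]
    · exact prod_eq_zero (mem_univ i) (by simpa [hij] using hf)
  calc ∑ v : Fin n → 𝒳, (∏ i, Q (v i)) * (∑ i, f (v i)) ^ 2
      = ∑ v : Fin n → 𝒳, ∑ i, ∑ j, (∏ k, Q (v k)) * (f (v i) * f (v j)) := by
        simp_rw [sq, sum_mul_sum, mul_sum]
    _ = ∑ i, ∑ j, ∑ v : Fin n → 𝒳, (∏ k, Q (v k)) * (f (v i) * f (v j)) := by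
        rw [sum_comm]
        exact sum_congr rfl fun i _ => sum_comm
    _ = n * ∑ x, Q x * f x ^ 2 := by simp [hcross]

end ProductWeights

section EmpiricalType

variable {𝒳 : Type*} [DecidableEq 𝒳] {n : ℕ}

def seqCount (v : Fin n → 𝒳) (x : 𝒳) : ℕ := #{i | v i = x}

noncomputable def empiricalType (v : Fin n → 𝒳) (x : 𝒳) : ℝ := seqCount v x / n

lemma seqCount_le (v : Fin n → 𝒳) (x : 𝒳) : seqCount v x ≤ n := by
  unfold seqCount
  simpa using card_filter_le univ (v · = x)

lemma empiricalType_nonneg (v : Fin n → 𝒳) (x : 𝒳) : 0 ≤ empiricalType v x := by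
  unfold empiricalType; positivity

lemma natCast_mul_empiricalType (v : Fin n → 𝒳) (x : 𝒳) :
    (n : ℝ) * empiricalType v x = seqCount v x := by
  rcases n.eq_zero_or_pos with rfl | hn
  · simp [seqCount]
  · unfold empiricalType; field_simp

lemma empiricalType_apply_pos (v : Fin n → 𝒳) (i : Fin n) : 0 < empiricalType v (v i) := by
  have : 0 < seqCount v (v i) := card_pos.2 ⟨i, by simp⟩
  have : 0 < n := i.pos
  unfold empiricalType
  positivity

variable [Fintype 𝒳]

lemma sum_comp_eq_sum_seqCount_mul (v : Fin n → 𝒳) (g : 𝒳 → ℝ) :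
    ∑ i, g (v i) = ∑ x, (seqCount v x : ℝ) * g x := by
  rw [← sum_fiberwise' univ v g]
  simp [seqCount]

lemma sum_comp_eq_mul_sum_empiricalType (v : Fin n → 𝒳) (g : 𝒳 → ℝ) :
    ∑ i, g (v i) = n * ∑ x, empiricalType v x * g x := by
  simp_rw [sum_comp_eq_sum_seqCount_mul, mul_sum, ← mul_assoc, natCast_mul_empiricalType]

lemma sum_empiricalType (hn : 0 < n) (v : Fin n → 𝒳) : ∑ x, empiricalType v x = 1 := by
  have h := sum_comp_eq_mul_sum_empiricalType v 1
  simp only [Pi.one_apply, mul_one, sum_const, card_univ, Fintype.card_fin, nsmul_eq_mul] at h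
  exact (mul_right_eq_self₀.1 h.symm).resolve_right (by positivity)

lemma card_image_empiricalType_le (s : Finset (Fin n → 𝒳)) :
    #(s.image empiricalType) ≤ (n + 1) ^ Fintype.card 𝒳 := by
  let ofCounts : (𝒳 → Fin (n + 1)) → 𝒳 → ℝ := fun c x => (c x : ℕ) / n
  have hsub : s.image empiricalType ⊆ univ.image ofCounts := by
    intro R hR
    obtain ⟨v, -, rfl⟩ := mem_image.1 hR
    exact mem_image.2 ⟨fun x => ⟨seqCount v x, Nat.lt_succ_of_le (seqCount_le v x)⟩,
      mem_univ _, rfl⟩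
  calc #(s.image empiricalType) ≤ #(univ.image ofCounts) := card_le_card hsub
    _ ≤ #(univ : Finset (𝒳 → Fin (n + 1))) := card_image_le
    _ = (n + 1) ^ Fintype.card 𝒳 := by simp

end EmpiricalType

lemma empiricalDist_eq_empiricalType {Ω 𝒳 : Type*} [DecidableEq 𝒳] (X : ℕ → Ω → 𝒳) (n : ℕ)
    (ω : Ω) :
    empiricalDist X n ω = empiricalType fun i : Fin n => X i ω := by
  ext x
  rw [empiricalDist, empiricalType, seqCount, sum_range fun i => if X i ω = x then (1 : ℝ) else 0,
    sum_boole, one_div_mul_eq_div]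

section KL

variable {𝒳 : Type*} [Fintype 𝒳]

lemma klDivergence_eq_sum {Q : 𝒳 → ℝ} (hQ : ∀ x, 0 ≤ Q x) (P : 𝒳 → ℝ) :
    klDivergence Q P = ∑ x, Q x * log (Q x / P x) := by
  refine sum_congr rfl fun x _ => ?_
  split_ifs with h
  · rfl
  · simp [le_antisymm (not_lt.1 h) (hQ x)]

open InformationTheory in
lemma klDivergence_nonneg {P Q : 𝒳 → ℝ} (hP : ∀ x, 0 < P x) (hP1 : ∑ x, P x = 1)
    (hQ : ∀ x, 0 ≤ Q x) (hQ1 : ∑ x, Q x = 1) : 0 ≤ klDivergence Q P := by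
  have hterm : ∀ x, Q x * log (Q x / P x) = P x * klFun (Q x / P x) + (Q x - P x) := by
    intro x
    rw [klFun_apply]
    field_simp [(hP x).ne']
    ring
  rw [klDivergence_eq_sum hQ, sum_congr rfl fun x _ => hterm x, sum_add_distrib,
    sum_sub_distrib, hP1, hQ1, sub_self, add_zero]
  exact sum_nonneg fun x _ => mul_nonneg (hP x).le (klFun_nonneg (div_nonneg (hQ x) (hP x).le))

lemma tvDist_triangle (Q R P : 𝒳 → ℝ) :
    tvDist Q P ≤ tvDist Q R + tvDist R P := by
  unfold tvDist
  rw [← mul_add, ← sum_add_distrib]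
  gcongr with x
  exact abs_sub_le _ _ _

lemma tvDist_le_card_mul_div_two {Q R : 𝒳 → ℝ} {δ : ℝ} (h : ∀ x, |Q x - R x| ≤ δ) :
    tvDist Q R ≤ Fintype.card 𝒳 * δ / 2 := by
  calc tvDist Q R ≤ 1 / 2 * ∑ _x : 𝒳, δ := by unfold tvDist; gcongr with x; exact h x
    _ = Fintype.card 𝒳 * δ / 2 := by simp; ring

variable [DecidableEq 𝒳] {n : ℕ}

lemma prod_eq_prod_mul_exp {P Q : 𝒳 → ℝ} (hP : ∀ x, 0 < P x) {v : Fin n → 𝒳}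
    (hQ : ∀ i, 0 < Q (v i)) :
    ∏ i, P (v i) = (∏ i, Q (v i)) * exp (-(n * ∑ x, empiricalType v x * log (Q x / P x))) := by
  rw [← sum_comp_eq_mul_sum_empiricalType, ← sum_neg_distrib, exp_sum, ← prod_mul_distrib]
  refine prod_congr rfl fun i _ => ?_
  rw [← log_inv, inv_div, exp_log (div_pos (hP _) (hQ i))]
  field_simp [(hQ i).ne']

lemma prod_eq_prod_empiricalType_mul_exp {P : 𝒳 → ℝ} (hP : ∀ x, 0 < P x) (v : Fin n → 𝒳) :
    ∏ i, P (v i) =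
      (∏ i, empiricalType v (v i)) * exp (-(n * klDivergence (empiricalType v) P)) := by
  rw [klDivergence_eq_sum (empiricalType_nonneg v)]
  exact prod_eq_prod_mul_exp hP (empiricalType_apply_pos v)

end KL

section UpperBound

variable {𝒳 : Type*} [Fintype 𝒳] [DecidableEq 𝒳] {n : ℕ}

lemma sum_prod_le_of_le_klDivergence {P : 𝒳 → ℝ} (hP : ∀ x, 0 < P x) {I : ℝ} (hn : 0 < n)
    (s : Finset (Fin n → 𝒳)) (hs : ∀ v ∈ s, I ≤ klDivergence (empiricalType v) P) :
    ∑ v ∈ s, ∏ i, P (v i) ≤ ((n : ℝ) + 1) ^ Fintype.card 𝒳 * exp (-(n * I)) := by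
  have hfiber : ∀ R ∈ s.image empiricalType,
      ∑ v ∈ s with empiricalType v = R, ∏ i, P (v i) ≤ exp (-(n * I)) := by
    intro R hR
    obtain ⟨v₀, hv₀, rfl⟩ := mem_image.1 hR
    have hD : exp (-(n * klDivergence (empiricalType v₀) P)) ≤ exp (-(n * I)) :=
      exp_le_exp.2 (neg_le_neg (mul_le_mul_of_nonneg_left (hs v₀ hv₀) n.cast_nonneg))
    calc ∑ v ∈ s with empiricalType v = empiricalType v₀, ∏ i, P (v i)
        = ∑ v ∈ s with empiricalType v = empiricalType v₀, (∏ i, empiricalType v₀ (v i)) *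
            exp (-(n * klDivergence (empiricalType v₀) P)) := by
          refine sum_congr rfl fun v hv => ?_
          rw [← (mem_filter.1 hv).2, prod_eq_prod_empiricalType_mul_exp hP]
      _ = (∑ v ∈ s with empiricalType v = empiricalType v₀, ∏ i, empiricalType v₀ (v i)) *
            exp (-(n * klDivergence (empiricalType v₀) P)) := (sum_mul ..).symm
      _ ≤ 1 * exp (-(n * I)) :=
          mul_le_mul (sum_prod_le_one (empiricalType_nonneg v₀) (sum_empiricalType hn v₀) _) hD
            (exp_pos _).le zero_le_one
      _ = exp (-(n * I)) := one_mul _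
  calc ∑ v ∈ s, ∏ i, P (v i)
      = ∑ R ∈ s.image empiricalType, ∑ v ∈ s with empiricalType v = R, ∏ i, P (v i) :=
        (sum_fiberwise_of_maps_to (fun v hv => mem_image_of_mem _ hv) _).symm
    _ ≤ ∑ R ∈ s.image empiricalType, exp (-(n * I)) := sum_le_sum hfiber
    _ = #(s.image empiricalType) * exp (-(n * I)) := by rw [sum_const, nsmul_eq_mul]
    _ ≤ ((n : ℝ) + 1) ^ Fintype.card 𝒳 * exp (-(n * I)) := by
        gcongr
        exact_mod_cast card_image_empiricalType_le s

end UpperBound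

lemma exp_neg_mul_add_le_half {D ε η t : ℝ} (hη : η ≤ ε / 2) (ht : 2 ≤ t * ε) (ht0 : 0 ≤ t) :
    exp (-(t * (D + ε))) ≤ exp (-(t * (D + η))) / 2 := by
  have h2 : 2 ≤ exp (t * (ε - η)) := by
    nlinarith [add_one_le_exp (t * (ε - η)), mul_le_mul_of_nonneg_left hη ht0]
  calc exp (-(t * (D + ε))) ≤ exp (-(t * (D + ε))) * exp (t * (ε - η)) / 2 := by
        rw [le_div_iff₀ two_pos]; gcongr
    _ = exp (-(t * (D + η))) / 2 := by rw [← exp_add]; ring_nf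

section LowerBound

variable {𝒳 : Type*} [Fintype 𝒳] [DecidableEq 𝒳] {n : ℕ}

lemma sum_prod_mul_sq_empiricalType_sub_le {Q : 𝒳 → ℝ} (hQ0 : ∀ x, 0 ≤ Q x)
    (hQ1 : ∑ x, Q x = 1) (hn : 0 < n) (x : 𝒳) :
    ∑ v : Fin n → 𝒳, (∏ i, Q (v i)) * (empiricalType v x - Q x) ^ 2 ≤ 1 / n := by
  set f : 𝒳 → ℝ := fun y => (if y = x then 1 else 0) - Q x
  have hf : ∑ y, Q y * f y = 0 := by
    simp [f, mul_sub, sum_sub_distrib, ← sum_mul, hQ1]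
  have hf2 : ∑ y, Q y * f y ^ 2 ≤ 1 := by
    have hQx : Q x ≤ 1 := hQ1 ▸ single_le_sum (fun y _ => hQ0 y) (mem_univ x)
    calc ∑ y, Q y * f y ^ 2 ≤ ∑ y, Q y := by
          refine sum_le_sum fun y _ => mul_le_of_le_one_right (hQ0 y) ?_
          rw [sq_le_one_iff_abs_le_one, abs_le]
          simp only [f]
          split_ifs <;> constructor <;> linarith [hQ0 x]
      _ = 1 := hQ1
  have hT : ∀ v : Fin n → 𝒳, empiricalType v x - Q x = (∑ i, f (v i)) / n := by
    intro v
    simp only [f, sum_sub_distrib, sum_boole, sum_const, card_univ, Fintype.card_fin,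
      nsmul_eq_mul, empiricalType, seqCount]
    field_simp
  calc ∑ v : Fin n → 𝒳, (∏ i, Q (v i)) * (empiricalType v x - Q x) ^ 2
      = (∑ v : Fin n → 𝒳, (∏ i, Q (v i)) * (∑ i, f (v i)) ^ 2) / n ^ 2 := by
        simp_rw [hT, div_pow, mul_div_assoc', sum_div]
    _ = (∑ y, Q y * f y ^ 2) / n := by
        rw [sum_prod_mul_sum_sq hQ1 hf]
        field_simp
    _ ≤ 1 / n := by gcongr

lemma one_sub_le_sum_prod_typical {Q : 𝒳 → ℝ} (hQ0 : ∀ x, 0 ≤ Q x) (hQ1 : ∑ x, Q x = 1)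
    (hn : 0 < n) {δ : ℝ} (hδ : 0 < δ) :
    1 - Fintype.card 𝒳 / (n * δ ^ 2) ≤
      ∑ v : Fin n → 𝒳 with ∀ x, |empiricalType v x - Q x| < δ, ∏ i, Q (v i) := by
  have hw : ∀ v : Fin n → 𝒳, 0 ≤ ∏ i, Q (v i) := fun v => prod_nonneg fun i _ => hQ0 (v i)
  have hsub : univ.filter (fun v : Fin n → 𝒳 => ¬∀ x, |empiricalType v x - Q x| < δ) ⊆
      univ.filter fun v => δ ^ 2 ≤ ∑ x, (empiricalType v x - Q x) ^ 2 := by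
    intro v hv
    simp only [mem_filter, mem_univ, true_and, not_forall, not_lt] at hv ⊢
    obtain ⟨x, hx⟩ := hv
    calc δ ^ 2 ≤ (empiricalType v x - Q x) ^ 2 :=
          (pow_le_pow_left₀ hδ.le hx 2).trans_eq (sq_abs _)
      _ ≤ ∑ x, (empiricalType v x - Q x) ^ 2 :=
        single_le_sum (f := fun x => (empiricalType v x - Q x) ^ 2) (fun _ _ => sq_nonneg _)
          (mem_univ x)
  have hatypical : ∑ v : Fin n → 𝒳 with ¬∀ x, |empiricalType v x - Q x| < δ, ∏ i, Q (v i) ≤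
      Fintype.card 𝒳 / (n * δ ^ 2) :=
    calc _ ≤ ∑ v : Fin n → 𝒳 with δ ^ 2 ≤ ∑ x, (empiricalType v x - Q x) ^ 2, ∏ i, Q (v i) :=
          sum_le_sum_of_subset_of_nonneg hsub fun v _ _ => hw v
      _ ≤ (∑ v, (∏ i, Q (v i)) * ∑ x, (empiricalType v x - Q x) ^ 2) / δ ^ 2 :=
          sum_filter_le_sum_mul_div _ (fun v _ => hw v)
            (fun v _ => sum_nonneg fun _ _ => sq_nonneg _) (by positivity)
      _ = (∑ x, ∑ v : Fin n → 𝒳, (∏ i, Q (v i)) * (empiricalType v x - Q x) ^ 2) / δ ^ 2 := by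
          simp_rw [mul_sum]
          rw [sum_comm]
      _ ≤ (∑ _x : 𝒳, 1 / (n : ℝ)) / δ ^ 2 := by
          gcongr with x
          exact sum_prod_mul_sq_empiricalType_sub_le hQ0 hQ1 hn x
      _ = Fintype.card 𝒳 / (n * δ ^ 2) := by
          rw [sum_const, card_univ, nsmul_eq_mul]
          field_simp
  have htotal := sum_filter_add_sum_filter_not univ (fun v : Fin n → 𝒳 =>
    ∀ x, |empiricalType v x - Q x| < δ) fun v => ∏ i, Q (v i)
  rw [← Fintype.sum_pow, hQ1, one_pow] at htotal
  linarith

lemma prod_mul_exp_le_prod_of_abs_sub_lt {P Q : 𝒳 → ℝ} (hP : ∀ x, 0 < P x)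
    (hQ0 : ∀ x, 0 ≤ Q x) {v : Fin n → 𝒳} {δ : ℝ} (hv : ∀ x, |empiricalType v x - Q x| < δ) :
    (∏ i, Q (v i)) * exp (-(n * (klDivergence Q P + δ * ∑ x, |log (Q x / P x)|))) ≤
      ∏ i, P (v i) := by
  by_cases hQv : ∀ i, 0 < Q (v i)
  · have hexponent : ∑ x, empiricalType v x * log (Q x / P x) ≤
        klDivergence Q P + δ * ∑ x, |log (Q x / P x)| := by
      rw [klDivergence_eq_sum hQ0, mul_sum, ← sub_le_iff_le_add', ← sum_sub_distrib]
      refine sum_le_sum fun x _ => ?_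
      calc empiricalType v x * log (Q x / P x) - Q x * log (Q x / P x)
          = (empiricalType v x - Q x) * log (Q x / P x) := by ring
        _ ≤ |empiricalType v x - Q x| * |log (Q x / P x)| := by
          rw [← abs_mul]; exact le_abs_self _
        _ ≤ δ * |log (Q x / P x)| := by gcongr; exact (hv x).le
    rw [prod_eq_prod_mul_exp hP hQv]
    have : 0 ≤ ∏ i, Q (v i) := prod_nonneg fun i _ => hQ0 (v i)
    gcongr
  · obtain ⟨i, hi⟩ := not_forall.1 hQv
    rw [prod_eq_zero (mem_univ i) (le_antisymm (not_lt.1 hi) (hQ0 _)), zero_mul]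
    exact prod_nonneg fun j _ => (hP _).le

lemma exp_div_two_le_sum_prod_typical {P Q : 𝒳 → ℝ} (hP : ∀ x, 0 < P x)
    (hQ0 : ∀ x, 0 ≤ Q x) (hQ1 : ∑ x, Q x = 1) (hn : 0 < n) {δ : ℝ} (hδ : 0 < δ)
    (hnδ : 2 * Fintype.card 𝒳 ≤ n * δ ^ 2) :
    exp (-(n * (klDivergence Q P + δ * ∑ x, |log (Q x / P x)|))) / 2 ≤
      ∑ v : Fin n → 𝒳 with ∀ x, |empiricalType v x - Q x| < δ, ∏ i, P (v i) := by
  set E := exp (-(n * (klDivergence Q P + δ * ∑ x, |log (Q x / P x)|)))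
  have hhalf : 1 / 2 ≤ 1 - Fintype.card 𝒳 / (n * δ ^ 2) := by
    rw [le_sub_comm, div_le_iff₀ (by positivity)]
    linarith
  calc E / 2 ≤ E * (1 - Fintype.card 𝒳 / (n * δ ^ 2)) := by
        rw [div_eq_mul_one_div]; gcongr
    _ ≤ E * ∑ v : Fin n → 𝒳 with ∀ x, |empiricalType v x - Q x| < δ, ∏ i, Q (v i) := by
        gcongr; exact one_sub_le_sum_prod_typical hQ0 hQ1 hn hδ
    _ = ∑ v : Fin n → 𝒳 with ∀ x, |empiricalType v x - Q x| < δ, (∏ i, Q (v i)) * E := by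
        rw [mul_sum]; simp_rw [mul_comm E]
    _ ≤ _ := sum_le_sum fun v hv =>
        prod_mul_exp_le_prod_of_abs_sub_lt hP hQ0 (mem_filter.1 hv).2

lemma eventually_exp_le_sum_prod_tvDist_gt {P Q : 𝒳 → ℝ} (hP : ∀ x, 0 < P x)
    (hQ0 : ∀ x, 0 ≤ Q x) (hQ1 : ∑ x, Q x = 1) {a : ℝ} (ha : a < tvDist Q P) {ε : ℝ}
    (hε : 0 < ε) :
    ∀ᶠ n : ℕ in atTop, exp (-(n * (klDivergence Q P + ε))) ≤
      ∑ v : Fin n → 𝒳 with a < tvDist (empiricalType v) P, ∏ i, P (v i) := by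
  set L := ∑ x, |log (Q x / P x)|
  set k := Fintype.card 𝒳
  -- small enough that uniformly `δ`-close types stay in the region and cost at most `ε / 2`
  set δ := min (ε / (2 * (L + 1))) ((tvDist Q P - a) / (k + 1))
  have hL : 0 ≤ L := sum_nonneg fun x _ => abs_nonneg _
  have hδ : 0 < δ := lt_min (by positivity) (div_pos (sub_pos.2 ha) (by positivity))
  have hδL : δ * L ≤ ε / 2 := by
    calc δ * L ≤ ε / (2 * (L + 1)) * L := by gcongr; exact min_le_left _ _
      _ ≤ ε / 2 := by
        rw [div_mul_eq_mul_div, div_le_div_iff₀ (by positivity) two_pos]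
        nlinarith
  have hδa : k * δ / 2 < tvDist Q P - a := by
    have : (k + 1) * δ ≤ tvDist Q P - a := (le_div_iff₀' (by positivity)).1 (min_le_right _ _)
    have : 0 ≤ k * δ := by positivity
    linarith
  filter_upwards [eventually_gt_atTop 0, eventually_ge_atTop ⌈2 * k / δ ^ 2⌉₊,
    eventually_ge_atTop ⌈2 / ε⌉₊] with n hn hnδ hnε
  have hnδ' : 2 * (k : ℝ) ≤ n * δ ^ 2 := (div_le_iff₀ (by positivity)).1 (Nat.ceil_le.1 hnδ)
  have hnε' : 2 ≤ n * ε := (div_le_iff₀ hε).1 (Nat.ceil_le.1 hnε)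
  calc exp (-(n * (klDivergence Q P + ε)))
      ≤ exp (-(n * (klDivergence Q P + δ * L))) / 2 :=
        exp_neg_mul_add_le_half hδL hnε' n.cast_nonneg
    _ ≤ ∑ v : Fin n → 𝒳 with ∀ x, |empiricalType v x - Q x| < δ, ∏ i, P (v i) :=
        exp_div_two_le_sum_prod_typical hP hQ0 hQ1 hn hδ hnδ'
    _ ≤ ∑ v : Fin n → 𝒳 with a < tvDist (empiricalType v) P, ∏ i, P (v i) := by
        refine sum_le_sum_of_subset_of_nonneg (monotone_filter_right _ fun v _ hv => ?_)
          fun v _ _ => prod_nonneg fun i _ => (hP _).le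
        have := tvDist_le_card_mul_div_two fun x => (abs_sub_comm (Q x) _ ▸ (hv x).le)
        linarith [tvDist_triangle Q (empiricalType v) P]

end LowerBound

lemma tendsto_inv_mul_log_of_bounds {p : ℕ → ℝ} {I : ℝ} (k : ℕ)
    (hupper : ∀ᶠ n : ℕ in atTop, p n ≤ ((n : ℝ) + 1) ^ k * exp (-(n * I)))
    (hlower : ∀ ε > 0, ∀ᶠ n : ℕ in atTop, exp (-(n * (I + ε))) ≤ p n) :
    Tendsto (fun n : ℕ => 1 / (n : ℝ) * log (p n)) atTop (𝓝 (-I)) := by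
  have hlog : Tendsto (fun n : ℕ => k * (log ((n : ℝ) + 1) / n)) atTop (𝓝 0) := by
    have h := (tendsto_pow_log_div_mul_add_atTop 1 (-1) 1 one_ne_zero).comp
      (tendsto_atTop_add_const_right atTop 1 tendsto_natCast_atTop_atTop)
    simpa using h.const_mul (k : ℝ)
  refine tendsto_order.2 ⟨fun b hb => ?_, fun b hb => ?_⟩
  · filter_upwards [hlower ((-I - b) / 2) (by linarith), eventually_gt_atTop 0] with n hn hn0
    have hn0' : (0 : ℝ) < n := Nat.cast_pos.2 hn0
    have : -(n * (I + (-I - b) / 2)) ≤ log (p n) := (le_log_iff_exp_le (by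
      linarith [exp_pos (-(n * (I + (-I - b) / 2)))])).2 hn
    rw [one_div_mul_eq_div, lt_div_iff₀ hn0']
    nlinarith
  · filter_upwards [hupper, hlower 1 one_pos,
      hlog.eventually (gt_mem_nhds (by linarith : 0 < b + I)), eventually_gt_atTop 0]
      with n hup hlow hsmall hn0
    have hn0' : (0 : ℝ) < n := Nat.cast_pos.2 hn0
    have hp : 0 < p n := (exp_pos _).trans_le hlow
    have : log (p n) ≤ k * log ((n : ℝ) + 1) - n * I := by
      calc log (p n) ≤ log (((n : ℝ) + 1) ^ k * exp (-(n * I))) := log_le_log hp hup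
        _ = k * log ((n : ℝ) + 1) - n * I := by
          rw [log_mul (by positivity) (exp_pos _).ne', log_pow, log_exp]; ring
    rw [one_div_mul_eq_div, div_lt_iff₀ hn0']
    rw [← mul_div_assoc, div_lt_iff₀ hn0'] at hsmall
    nlinarith

lemma measure_seq_mem_eq_sum_prod {Ω 𝒳 : Type*} [MeasurableSpace Ω] {μ : Measure Ω}
    [Fintype 𝒳] [MeasurableSpace 𝒳] [MeasurableSingletonClass 𝒳] {P : 𝒳 → ℝ}
    (hP : ∀ x, 0 ≤ P x) {X : ℕ → Ω → 𝒳} (hmeas : ∀ i, Measurable (X i))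
    (hindep : iIndepFun X μ) (hdist : ∀ i x, μ {ω | X i ω = x} = ENNReal.ofReal (P x))
    {n : ℕ} (s : Finset (Fin n → 𝒳)) :
    μ {ω | (fun i : Fin n => X i ω) ∈ s} = ENNReal.ofReal (∑ v ∈ s, ∏ i, P (v i)) := by
  set Y : Ω → Fin n → 𝒳 := fun ω i => X i ω
  have hY : ∀ v, Y ⁻¹' {v} = ⋂ i : Fin n, X i ⁻¹' {v i} := by
    intro v; ext ω; simp [Y, funext_iff]
  have hYv : ∀ v, μ (Y ⁻¹' {v}) = ENNReal.ofReal (∏ i, P (v i)) := by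
    intro v
    rw [hY, (hindep.precomp Fin.val_injective).meas_iInter
      fun i => ⟨{v i}, measurableSet_singleton _, rfl⟩,
      ENNReal.ofReal_prod_of_nonneg fun i _ => hP _]
    exact prod_congr rfl fun i _ => hdist i (v i)
  rw [ENNReal.ofReal_sum_of_nonneg fun v _ => prod_nonneg fun i _ => hP _]
  simp_rw [← hYv]
  exact (sum_measure_preimage_singleton s fun v _ =>
    hY v ▸ MeasurableSet.iInter fun i => hmeas i (measurableSet_singleton _)).symm

lemma toReal_measure_empiricalDist_eq_sum {Ω 𝒳 : Type*} [MeasurableSpace Ω] {μ : Measure Ω}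
    [Fintype 𝒳] [DecidableEq 𝒳] [MeasurableSpace 𝒳] [MeasurableSingletonClass 𝒳]
    {P : 𝒳 → ℝ} (hP : ∀ x, 0 ≤ P x) {X : ℕ → Ω → 𝒳} (hmeas : ∀ i, Measurable (X i))
    (hindep : iIndepFun X μ) (hdist : ∀ i x, μ {ω | X i ω = x} = ENNReal.ofReal (P x))
    (A : (𝒳 → ℝ) → Prop) [DecidablePred A] (n : ℕ) :
    (μ {ω | A (empiricalDist X n ω)}).toReal =
      ∑ v : Fin n → 𝒳 with A (empiricalType v), ∏ i, P (v i) := by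
  have hevent : {ω | A (empiricalDist X n ω)} =
      {ω | (fun i : Fin n => X i ω) ∈ univ.filter fun v => A (empiricalType v)} := by
    simp [empiricalDist_eq_empiricalType]
  rw [hevent, measure_seq_mem_eq_sum_prod hP hmeas hindep hdist,
    ENNReal.toReal_ofReal (sum_nonneg fun v _ => prod_nonneg fun i _ => hP _)]

theorem sanov_empirical_general {Ω : Type*} [MeasurableSpace Ω] (μ : Measure Ω)
    {𝒳 : Type*} [Fintype 𝒳] [DecidableEq 𝒳]
    [m𝒳 : MeasurableSpace 𝒳] [MeasurableSingletonClass 𝒳]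
    (P : 𝒳 → ℝ) (hPpos : ∀ x, 0 < P x) (hPsum : ∑ x, P x = 1)
    (X : ℕ → Ω → 𝒳) (hmeas : ∀ i, Measurable (X i))
    (hindep : iIndepFun X μ)
    (hdist : ∀ i x, μ {ω | X i ω = x} = ENNReal.ofReal (P x))
    (a : ℝ)
    (hne : ∃ Q : 𝒳 → ℝ, (∀ x, 0 ≤ Q x) ∧ (∑ x, Q x = 1) ∧ a < tvDist Q P) :
    Tendsto (fun n : ℕ => (1 / (n : ℝ)) *
        Real.log ((μ {ω | a < tvDist (empiricalDist X n ω) P}).toReal))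
      atTop
      (nhds (-sInf {r : ℝ | ∃ Q : 𝒳 → ℝ,
        (∀ x, 0 ≤ Q x) ∧ (∑ x, Q x = 1) ∧ a < tvDist Q P ∧ r = klDivergence Q P})) := by
  set rates := {r : ℝ | ∃ Q : 𝒳 → ℝ,
    (∀ x, 0 ≤ Q x) ∧ (∑ x, Q x = 1) ∧ a < tvDist Q P ∧ r = klDivergence Q P}
  have hbdd : BddBelow rates := ⟨0, by
    rintro r ⟨Q, hQ0, hQ1, -, rfl⟩
    exact klDivergence_nonneg hPpos hPsum hQ0 hQ1⟩
  simp_rw [toReal_measure_empiricalDist_eq_sum (fun x => (hPpos x).le) hmeas hindep hdist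
    (fun R => a < tvDist R P)]
  refine tendsto_inv_mul_log_of_bounds (Fintype.card 𝒳) ?_ fun ε hε => ?_
  · filter_upwards [eventually_gt_atTop 0] with n hn
    exact sum_prod_le_of_le_klDivergence hPpos hn _ fun v hv => csInf_le hbdd
      ⟨_, empiricalType_nonneg v, sum_empiricalType hn v, (mem_filter.1 hv).2, rfl⟩
  · obtain ⟨Q₀, hQ₀0, hQ₀1, hQ₀a⟩ := hne
    obtain ⟨_, ⟨Q, hQ0, hQ1, hQa, rfl⟩, hQI⟩ := exists_lt_of_csInf_lt
      (⟨_, Q₀, hQ₀0, hQ₀1, hQ₀a, rfl⟩ : rates.Nonempty)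
      (lt_add_of_pos_right (sInf rates) (half_pos hε))
    filter_upwards [eventually_exp_le_sum_prod_tvDist_gt hPpos hQ0 hQ1 hQa (half_pos hε)]
      with n hn
    refine (exp_le_exp.2 ?_).trans hn
    have : (0 : ℝ) ≤ n := n.cast_nonneg
    nlinarith

/-- **Sanov's theorem for empirical distributions.**  For i.i.d. samples from an
everywhere-positive pmf `P` on a finite set, the probability that the empirical
distribution is farther than `a` from `P` in total variation decays exponentially,
with exponent the infimum of `D(Q‖P)` over all pmfs `Q` with `d_TV(Q, P) > a`. -/
theorem sanov_empirical {Ω : Type*} [MeasurableSpace Ω] (μ : Measure Ω)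
    [IsProbabilityMeasure μ] {𝒳 : Type*} [Fintype 𝒳] [DecidableEq 𝒳]
    [m𝒳 : MeasurableSpace 𝒳] [MeasurableSingletonClass 𝒳]
    (P : 𝒳 → ℝ) (hPpos : ∀ x, 0 < P x) (hPsum : ∑ x, P x = 1)
    (X : ℕ → Ω → 𝒳) (hmeas : ∀ i, Measurable (X i))
    (hindep : iIndepFun X μ)
    (hdist : ∀ i x, μ {ω | X i ω = x} = ENNReal.ofReal (P x))
    (a : ℝ) (ha0 : 0 < a) (ha1 : a < 1)
    (hne : ∃ Q : 𝒳 → ℝ, (∀ x, 0 ≤ Q x) ∧ (∑ x, Q x = 1) ∧ a < tvDist Q P) :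
    Tendsto (fun n : ℕ => (1 / (n : ℝ)) *
        Real.log ((μ {ω | a < tvDist (empiricalDist X n ω) P}).toReal))
      atTop
      (nhds (-sInf {r : ℝ | ∃ Q : 𝒳 → ℝ,
        (∀ x, 0 ≤ Q x) ∧ (∑ x, Q x = 1) ∧ a < tvDist Q P ∧ r = klDivergence Q P})) :=
  sanov_empirical_general μ (m𝒳 := m𝒳) P hPpos hPsum X hmeas hindep hdist a hne
end

section
/- Let 𝒳 be a finite set, and let P1, P2 be probability mass functions on 𝒳 with P1(x) > 0 and P2(x) > 0 for all x ∈ 𝒳 and P1 ≠ P2. Let π ∈ (0,1) be the prior probability of hypothesis P1. Then there exists a sequence of decision sets A_n ⊆ 𝒳^n such that the Bayes error probability P_n^{(e)} = π · P1^⊗n(𝒳^n \ A_n) + (1−π) · P2^⊗n(A_n) satisfies lim_{n→∞} (1/n) · log P_n^{(e)} = −C(P1, P2), where C(P1, P2) = −log inf_{t∈ℝ} Σ_{x∈𝒳} P1(x)^{1−t} P2(x)^{t} is the Chernoff information of P1 and P2. -/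
/-!
Write `f t = ∑ x, P1 x ^ (1 - t) * P2 x ^ t` and `L = log P2 - log P1`. Since `f 0 = f 1 = 1`,
Rolle's theorem gives `s ∈ (0, 1)` with `f' s = 0`, i.e. `L` has mean zero under the tilted law
`Q ∝ P1 ^ (1 - s) * P2 ^ s`; as `f t / f s` is the `Q`-mean of `exp ((t - s) * L)`, Jensen shows
that `s` minimises `f` on all of `ℝ`.

The maximum-likelihood test has Bayes error within the factor `min p (1 - p)` of
`∑ x, min (P1^⊗n x) (P2^⊗n x)`. This overlap is at most `f s ^ n`, because
`min a b ≤ a ^ (1 - s) * b ^ s`, and at least `f s ^ n * E[exp (-|Sₙ|)]`, where `Sₙ` is a sum of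
`n` independent copies of `L` under `Q`. Since `Sₙ` is centred, Jensen and Cauchy–Schwarz give
`E[exp (-|Sₙ|)] ≥ exp (-√(n Var L))`, which is subexponential.
-/

open Filter Real

/-- Probability of a set of `n`-tuples under the `n`-fold product of the pmf `P`. -/
noncomputable def prodPMFProb {𝒳 : Type*} [Fintype 𝒳] (P : 𝒳 → ℝ) {n : ℕ}
    (A : Set (Fin n → 𝒳)) : ℝ :=
  ∑ x : Fin n → 𝒳, A.indicator (fun y => ∏ i, P (y i)) x

/-- The Chernoff information of two everywhere-positive pmfs on a finite set. -/
noncomputable def chernoffInformation {𝒳 : Type*} [Fintype 𝒳] (P1 P2 : 𝒳 → ℝ) : ℝ :=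
  -Real.log (⨅ t : ℝ, ∑ x, P1 x ^ (1 - t) * P2 x ^ t)

open Finset

section FiniteExpectation

variable {α : Type*} [Fintype α] {Q g : α → ℝ}

theorem exp_sum_mul_le_sum_mul_exp (hQ : ∀ a, 0 ≤ Q a) (hQ1 : ∑ a, Q a = 1) :
    exp (∑ a, Q a * g a) ≤ ∑ a, Q a * exp (g a) := by
  simpa only [smul_eq_mul] using
    convexOn_exp.map_sum_le (fun a _ => hQ a) hQ1 (fun a _ => Set.mem_univ (g a))

theorem sum_mul_abs_le_sqrt_sum_mul_sq (hQ : ∀ a, 0 ≤ Q a) (hQ1 : ∑ a, Q a = 1) :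
    ∑ a, Q a * |g a| ≤ √(∑ a, Q a * g a ^ 2) := by
  refine Real.le_sqrt_of_sq_le ?_
  calc (∑ a, Q a * |g a|) ^ 2 ≤ (∑ a, Q a) * ∑ a, Q a * g a ^ 2 :=
        sum_sq_le_sum_mul_sum_of_sq_le_mul _ (fun a _ => hQ a)
          (fun a _ => mul_nonneg (hQ a) (sq_nonneg _))
          (fun a _ => le_of_eq (by rw [mul_pow, sq_abs]; ring))
    _ = ∑ a, Q a * g a ^ 2 := by rw [hQ1, one_mul]

theorem sum_pi_prod_eq_one (hQ1 : ∑ a, Q a = 1) (n : ℕ) :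
    ∑ x : Fin n → α, ∏ i, Q (x i) = 1 := by
  rw [← Fintype.sum_pow, hQ1, one_pow]

theorem sum_pi_prod_mul_sum_sq (hQ1 : ∑ a, Q a = 1) (hmean : ∑ a, Q a * g a = 0) (n : ℕ) :
    ∑ x : Fin n → α, (∏ i, Q (x i)) * (∑ i, g (x i)) ^ 2 = n * ∑ a, Q a * g a ^ 2 := by
  induction n with
  | zero => simp
  | succ n ih =>
    rw [← (Fin.consEquiv fun _ => α).sum_comp, Fintype.sum_prod_type]
    simp only [Fin.consEquiv_apply, Fin.prod_univ_succ, Fin.sum_univ_succ, Fin.cons_zero,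
      Fin.cons_succ]
    calc _ = ∑ a, (Q a * g a ^ 2 * ∑ y : Fin n → α, ∏ i, Q (y i)
          + Q a * g a * (2 * ∑ y : Fin n → α, (∏ i, Q (y i)) * ∑ i, g (y i))
          + Q a * ∑ y : Fin n → α, (∏ i, Q (y i)) * (∑ i, g (y i)) ^ 2) := by
          refine sum_congr rfl fun a _ => ?_
          rw [mul_sum, mul_sum, mul_sum, mul_sum, ← sum_add_distrib, ← sum_add_distrib]
          exact sum_congr rfl fun y _ => by ring
      _ = _ := by
          rw [sum_pi_prod_eq_one hQ1, ih, sum_add_distrib, sum_add_distrib, ← sum_mul,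
            ← sum_mul, ← sum_mul, hmean, hQ1]
          push_cast
          ring

end FiniteExpectation

section RpowExp

variable {a b : ℝ}

theorem rpow_one_sub_mul_rpow_eq (ha : 0 < a) (hb : 0 < b) (s t : ℝ) :
    a ^ (1 - t) * b ^ t = a ^ (1 - s) * b ^ s * exp ((t - s) * (log b - log a)) := by
  simp only [rpow_def_of_pos ha, rpow_def_of_pos hb, ← exp_add]
  ring_nf

theorem min_le_rpow_one_sub_mul_rpow (ha : 0 ≤ a) (hb : 0 ≤ b) {t : ℝ} (ht0 : 0 ≤ t)
    (ht1 : t ≤ 1) : min a b ≤ a ^ (1 - t) * b ^ t := by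
  have hm : 0 ≤ min a b := le_min ha hb
  calc min a b = min a b ^ (1 - t) * min a b ^ t := by
        rw [← rpow_add' hm (by norm_num), sub_add_cancel, rpow_one]
    _ ≤ a ^ (1 - t) * b ^ t := by
        gcongr
        exacts [min_le_left a b, min_le_right a b]

theorem rpow_one_sub_mul_rpow_mul_exp_neg_abs_le_min (ha : 0 < a) (hb : 0 < b) {s : ℝ}
    (hs0 : 0 ≤ s) (hs1 : s ≤ 1) : a ^ (1 - s) * b ^ s * exp (-|log b - log a|) ≤ min a b := by
  have hD := abs_le.1 (le_refl |log b - log a|)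
  refine le_min ?_ ?_
  · calc _ ≤ a ^ (1 - s) * b ^ s * exp ((0 - s) * (log b - log a)) := by
          gcongr; nlinarith
      _ = a := by rw [← rpow_one_sub_mul_rpow_eq ha hb]; simp
  · calc _ ≤ a ^ (1 - s) * b ^ s * exp ((1 - s) * (log b - log a)) := by
          gcongr; nlinarith
      _ = b := by rw [← rpow_one_sub_mul_rpow_eq ha hb]; simp

theorem prod_rpow_one_sub_mul_prod_rpow {ι : Type*} (s : Finset ι) {f g : ι → ℝ}
    (hf : ∀ i ∈ s, 0 ≤ f i) (hg : ∀ i ∈ s, 0 ≤ g i) (t : ℝ) :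
    (∏ i ∈ s, f i) ^ (1 - t) * (∏ i ∈ s, g i) ^ t
      = ∏ i ∈ s, f i ^ (1 - t) * g i ^ t := by
  rw [← finsetProd_rpow _ _ hf, ← finsetProd_rpow _ _ hg, prod_mul_distrib]

end RpowExp

section ChernoffCoefficient

variable {α : Type*} [Fintype α] {P1 P2 : α → ℝ}

noncomputable def chernoffCoeff (P1 P2 : α → ℝ) (t : ℝ) : ℝ :=
  ∑ x, P1 x ^ (1 - t) * P2 x ^ t

noncomputable def llr (P1 P2 : α → ℝ) (x : α) : ℝ :=
  log (P2 x) - log (P1 x)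

noncomputable def tilted (P1 P2 : α → ℝ) (s : ℝ) (x : α) : ℝ :=
  P1 x ^ (1 - s) * P2 x ^ s / chernoffCoeff P1 P2 s

theorem chernoffCoeff_zero : chernoffCoeff P1 P2 0 = ∑ x, P1 x := by
  simp [chernoffCoeff]

theorem chernoffCoeff_one : chernoffCoeff P1 P2 1 = ∑ x, P2 x := by
  simp [chernoffCoeff]

theorem chernoffCoeff_pos [Nonempty α] (h1 : ∀ x, 0 < P1 x) (h2 : ∀ x, 0 < P2 x) (t : ℝ) :
    0 < chernoffCoeff P1 P2 t :=
  sum_pos (fun x _ => mul_pos (rpow_pos_of_pos (h1 x) _) (rpow_pos_of_pos (h2 x) _))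
    univ_nonempty

theorem hasDerivAt_chernoffCoeff (h1 : ∀ x, 0 < P1 x) (h2 : ∀ x, 0 < P2 x) (s : ℝ) :
    HasDerivAt (chernoffCoeff P1 P2) (∑ x, P1 x ^ (1 - s) * P2 x ^ s * llr P1 P2 x) s := by
  have hterm (x : α) : HasDerivAt (fun t => P1 x ^ (1 - t) * P2 x ^ t)
      (P1 x ^ (1 - s) * P2 x ^ s * llr P1 P2 x) s := by
    rw [funext (rpow_one_sub_mul_rpow_eq (h1 x) (h2 x) s)]
    simpa [llr] using (((hasDerivAt_id s).sub_const s).mul_const (llr P1 P2 x)).exp.const_mul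
      (P1 x ^ (1 - s) * P2 x ^ s)
  exact HasDerivAt.fun_sum fun x _ => hterm x

theorem tilted_nonneg [Nonempty α] (h1 : ∀ x, 0 < P1 x) (h2 : ∀ x, 0 < P2 x) (s : ℝ)
    (x : α) : 0 ≤ tilted P1 P2 s x :=
  div_nonneg (mul_pos (rpow_pos_of_pos (h1 x) _) (rpow_pos_of_pos (h2 x) _)).le
    (chernoffCoeff_pos h1 h2 s).le

theorem chernoffCoeff_mul_tilted {s : ℝ} (hs : chernoffCoeff P1 P2 s ≠ 0) (x : α) :
    chernoffCoeff P1 P2 s * tilted P1 P2 s x = P1 x ^ (1 - s) * P2 x ^ s :=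
  mul_div_cancel₀ _ hs

theorem sum_tilted {s : ℝ} (hs : chernoffCoeff P1 P2 s ≠ 0) : ∑ x, tilted P1 P2 s x = 1 := by
  simp only [tilted, ← sum_div]
  exact div_self hs

theorem chernoffCoeff_pow_mul_prod_tilted {s : ℝ} (hs : chernoffCoeff P1 P2 s ≠ 0) {n : ℕ}
    (x : Fin n → α) :
    chernoffCoeff P1 P2 s ^ n * ∏ i, tilted P1 P2 s (x i)
      = ∏ i, P1 (x i) ^ (1 - s) * P2 (x i) ^ s := by
  simp only [← chernoffCoeff_mul_tilted hs, prod_mul_distrib, prod_const, card_univ,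
    Fintype.card_fin]

theorem exists_sum_tilted_mul_llr_eq_zero (h1 : ∀ x, 0 < P1 x) (h2 : ∀ x, 0 < P2 x)
    (hsum : ∑ x, P1 x = ∑ x, P2 x) :
    ∃ s ∈ Set.Ioo (0 : ℝ) 1, ∑ x, tilted P1 P2 s x * llr P1 P2 x = 0 := by
  obtain ⟨s, hs, hderiv⟩ := exists_hasDerivAt_eq_zero zero_lt_one
    (fun t _ => (hasDerivAt_chernoffCoeff h1 h2 t).continuousAt.continuousWithinAt)
    (by rw [chernoffCoeff_zero, chernoffCoeff_one, hsum])
    (fun t _ => hasDerivAt_chernoffCoeff h1 h2 t)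
  refine ⟨s, hs, ?_⟩
  simp only [tilted, div_mul_eq_mul_div, ← sum_div, hderiv, zero_div]

theorem chernoffCoeff_le_of_sum_tilted_mul_llr_eq_zero [Nonempty α] (h1 : ∀ x, 0 < P1 x)
    (h2 : ∀ x, 0 < P2 x) {s : ℝ} (hmean : ∑ x, tilted P1 P2 s x * llr P1 P2 x = 0) (t : ℝ) :
    chernoffCoeff P1 P2 s ≤ chernoffCoeff P1 P2 t := by
  have hs := chernoffCoeff_pos h1 h2 s
  calc chernoffCoeff P1 P2 s
      = chernoffCoeff P1 P2 s * exp (∑ x, tilted P1 P2 s x * ((t - s) * llr P1 P2 x)) := by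
        simp only [mul_left_comm _ (t - s), ← mul_sum, hmean, mul_zero, exp_zero, mul_one]
    _ ≤ chernoffCoeff P1 P2 s * ∑ x, tilted P1 P2 s x * exp ((t - s) * llr P1 P2 x) := by
        gcongr
        exact exp_sum_mul_le_sum_mul_exp (tilted_nonneg h1 h2 s) (sum_tilted hs.ne')
    _ = chernoffCoeff P1 P2 t := by
        simp only [mul_sum, ← mul_assoc, chernoffCoeff_mul_tilted hs.ne', llr]
        exact sum_congr rfl fun x _ => (rpow_one_sub_mul_rpow_eq (h1 x) (h2 x) s t).symm

end ChernoffCoefficient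

section Overlap

variable {α : Type*} [Fintype α] {P1 P2 : α → ℝ}

noncomputable def minOverlap (P1 P2 : α → ℝ) (n : ℕ) : ℝ :=
  ∑ x : Fin n → α, min (∏ i, P1 (x i)) (∏ i, P2 (x i))

theorem prodPMFProb_nonneg {P : α → ℝ} (hP : ∀ x, 0 ≤ P x) {n : ℕ}
    (A : Set (Fin n → α)) :
    0 ≤ prodPMFProb P A :=
  sum_nonneg fun x _ => Set.indicator_nonneg (fun y _ => prod_nonneg fun i _ => hP (y i)) x

def mlTest (P1 P2 : α → ℝ) (n : ℕ) : Set (Fin n → α) :=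
  {x | ∏ i, P2 (x i) ≤ ∏ i, P1 (x i)}

theorem prodPMFProb_compl_mlTest_add_prodPMFProb_mlTest (P1 P2 : α → ℝ) (n : ℕ) :
    prodPMFProb P1 (mlTest P1 P2 n)ᶜ + prodPMFProb P2 (mlTest P1 P2 n) = minOverlap P1 P2 n := by
  rw [prodPMFProb, prodPMFProb, ← sum_add_distrib]
  refine sum_congr rfl fun x _ => ?_
  by_cases hx : ∏ i, P2 (x i) ≤ ∏ i, P1 (x i)
  · simp [mlTest, Set.indicator, hx]
  · simp [mlTest, Set.indicator, hx, min_eq_left (not_le.1 hx).le]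

theorem bayesError_mlTest_mem_Icc (h1 : ∀ x, 0 ≤ P1 x) (h2 : ∀ x, 0 ≤ P2 x) {p : ℝ}
    (hp0 : 0 ≤ p) (hp1 : p ≤ 1) (n : ℕ) :
    p * prodPMFProb P1 (mlTest P1 P2 n)ᶜ + (1 - p) * prodPMFProb P2 (mlTest P1 P2 n)
      ∈ Set.Icc (min p (1 - p) * minOverlap P1 P2 n) (minOverlap P1 P2 n) := by
  have ha := prodPMFProb_nonneg h1 (mlTest P1 P2 n)ᶜ
  have hb := prodPMFProb_nonneg h2 (mlTest P1 P2 n)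
  rw [← prodPMFProb_compl_mlTest_add_prodPMFProb_mlTest]
  constructor <;> nlinarith [min_le_left p (1 - p), min_le_right p (1 - p)]

theorem minOverlap_le_chernoffCoeff_pow (h1 : ∀ x, 0 ≤ P1 x) (h2 : ∀ x, 0 ≤ P2 x) {t : ℝ}
    (ht0 : 0 ≤ t) (ht1 : t ≤ 1) (n : ℕ) :
    minOverlap P1 P2 n ≤ chernoffCoeff P1 P2 t ^ n := by
  calc minOverlap P1 P2 n ≤ ∑ x : Fin n → α, ∏ i, (P1 (x i) ^ (1 - t) * P2 (x i) ^ t) :=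
        sum_le_sum fun x _ => prod_rpow_one_sub_mul_prod_rpow univ (fun i _ => h1 (x i))
            (fun i _ => h2 (x i)) t ▸
          min_le_rpow_one_sub_mul_rpow (prod_nonneg fun i _ => h1 (x i))
            (prod_nonneg fun i _ => h2 (x i)) ht0 ht1
    _ = chernoffCoeff P1 P2 t ^ n :=
        (Fintype.sum_pow (fun a => P1 a ^ (1 - t) * P2 a ^ t) n).symm

theorem chernoffCoeff_pow_mul_prod_tilted_mul_exp_le_min [Nonempty α] (h1 : ∀ x, 0 < P1 x)
    (h2 : ∀ x, 0 < P2 x) {s : ℝ} (hs0 : 0 ≤ s) (hs1 : s ≤ 1) {n : ℕ} (x : Fin n → α) :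
    chernoffCoeff P1 P2 s ^ n * ((∏ i, tilted P1 P2 s (x i)) * exp (-|∑ i, llr P1 P2 (x i)|))
      ≤ min (∏ i, P1 (x i)) (∏ i, P2 (x i)) := by
  rw [← mul_assoc, chernoffCoeff_pow_mul_prod_tilted (chernoffCoeff_pos h1 h2 s).ne',
    ← prod_rpow_one_sub_mul_prod_rpow univ (fun i _ => (h1 (x i)).le) (fun i _ => (h2 (x i)).le)]
  convert rpow_one_sub_mul_rpow_mul_exp_neg_abs_le_min (prod_pos (s := univ) fun i _ => h1 (x i))
    (prod_pos (s := univ) fun i _ => h2 (x i)) hs0 hs1 using 5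
  rw [log_prod (fun i _ => (h1 (x i)).ne'), log_prod (fun i _ => (h2 (x i)).ne'),
    ← sum_sub_distrib]
  rfl

theorem chernoffCoeff_pow_mul_exp_le_minOverlap [Nonempty α] (h1 : ∀ x, 0 < P1 x)
    (h2 : ∀ x, 0 < P2 x) {s : ℝ} (hs0 : 0 ≤ s) (hs1 : s ≤ 1)
    (hmean : ∑ x, tilted P1 P2 s x * llr P1 P2 x = 0) (n : ℕ) :
    chernoffCoeff P1 P2 s ^ n * exp (-√(n * ∑ x, tilted P1 P2 s x * llr P1 P2 x ^ 2))
      ≤ minOverlap P1 P2 n := by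
  set Q := tilted P1 P2 s
  set L := llr P1 P2
  have hm : 0 ≤ chernoffCoeff P1 P2 s ^ n := pow_nonneg (chernoffCoeff_pos h1 h2 s).le n
  have hQ1 : ∑ a, Q a = 1 := sum_tilted (chernoffCoeff_pos h1 h2 s).ne'
  have hQn (x : Fin n → α) : 0 ≤ ∏ i, Q (x i) :=
    prod_nonneg fun i _ => tilted_nonneg h1 h2 s (x i)
  have hQn1 := sum_pi_prod_eq_one hQ1 n
  calc chernoffCoeff P1 P2 s ^ n * exp (-√(n * ∑ x, Q x * L x ^ 2))
      ≤ chernoffCoeff P1 P2 s ^ n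
          * exp (∑ x : Fin n → α, (∏ i, Q (x i)) * -|∑ i, L (x i)|) := by
        refine mul_le_mul_of_nonneg_left (exp_le_exp.2 ?_) hm
        rw [← sum_pi_prod_mul_sum_sq hQ1 hmean n]
        simpa only [mul_neg, sum_neg_distrib, neg_le_neg_iff] using
          sum_mul_abs_le_sqrt_sum_mul_sq hQn hQn1
    _ ≤ chernoffCoeff P1 P2 s ^ n
          * ∑ x : Fin n → α, (∏ i, Q (x i)) * exp (-|∑ i, L (x i)|) :=
        mul_le_mul_of_nonneg_left (exp_sum_mul_le_sum_mul_exp hQn hQn1) hm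
    _ ≤ minOverlap P1 P2 n := by
        rw [mul_sum]
        exact sum_le_sum fun x _ =>
          chernoffCoeff_pow_mul_prod_tilted_mul_exp_le_min h1 h2 hs0 hs1 x

end Overlap

theorem tendsto_inv_mul_log_of_le_of_le {u : ℕ → ℝ} {c m V : ℝ} (hc : 0 < c) (hm : 0 < m)
    (hlow : ∀ n : ℕ, c * (m ^ n * exp (-√(n * V))) ≤ u n)
    (hup : ∀ n : ℕ, u n ≤ m ^ n) :
    Tendsto (fun n : ℕ => 1 / (n : ℝ) * log (u n)) atTop (nhds (log m)) := by
  have hlog (n : ℕ) : log c + n * log m - √(n * V) ≤ log (u n) := by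
    have h := log_le_log (by positivity) (hlow n)
    rwa [log_mul hc.ne' (by positivity), log_mul (by positivity) (exp_pos _).ne', log_pow,
      log_exp, ← add_assoc, ← sub_eq_add_neg] at h
  have hsqrt : Tendsto (fun n : ℕ => √(V / n)) atTop (nhds 0) := by
    simpa only [Function.comp_def, sqrt_zero] using
      (continuous_sqrt.tendsto 0).comp (tendsto_const_div_atTop_nhds_zero_nat V)
  have hlower : Tendsto (fun n : ℕ => log m + log c * (1 / n) - √(V / n)) atTop
      (nhds (log m)) := by
    convert ((tendsto_one_div_atTop_nhds_zero_nat.const_mul (log c)).const_add (log m)).sub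
      hsqrt
    simp
  refine tendsto_of_tendsto_of_tendsto_of_le_of_le' hlower tendsto_const_nhds ?_ ?_
  · filter_upwards [eventually_gt_atTop 0] with n hn
    have hn' : (0 : ℝ) < n := Nat.cast_pos.2 hn
    have hsq : √(V / n) * n = √(n * V) := by
      nth_rw 2 [← sqrt_sq hn'.le]
      rw [← sqrt_mul' _ (sq_nonneg _)]
      congr 1
      field_simp
    have h : (log m + log c * (1 / n) - √(V / n)) * n = log c + n * log m - √(n * V) := by
      rw [← hsq]
      field_simp
      ring
    rw [one_div_mul_eq_div, le_div_iff₀ hn', h]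
    exact hlog n
  · filter_upwards [eventually_gt_atTop 0] with n hn
    have hn' : (0 : ℝ) < n := Nat.cast_pos.2 hn
    have h := log_le_log (lt_of_lt_of_le (by positivity) (hlow n)) (hup n)
    rw [log_pow] at h
    rw [one_div_mul_eq_div, div_le_iff₀ hn']
    linarith

theorem chernoff_fingerprinting_general {𝒳 : Type*} [Fintype 𝒳] (P1 P2 : 𝒳 → ℝ)
    (h1pos : ∀ x, 0 < P1 x) (h1sum : ∑ x, P1 x = 1)
    (h2pos : ∀ x, 0 < P2 x) (h2sum : ∑ x, P2 x = 1)
    (p : ℝ) (hp0 : 0 < p) (hp1 : p < 1) :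
    ∃ A : (n : ℕ) → Set (Fin n → 𝒳),
      Tendsto (fun n : ℕ => (1 / (n : ℝ)) *
          Real.log (p * prodPMFProb P1 ((A n)ᶜ) + (1 - p) * prodPMFProb P2 (A n)))
        atTop (nhds (-(chernoffInformation P1 P2))) := by
  have : Nonempty 𝒳 := by
    by_contra h
    simp [not_nonempty_iff.1 h] at h1sum
  obtain ⟨s, ⟨hs0, hs1⟩, hmean⟩ :=
    exists_sum_tilted_mul_llr_eq_zero h1pos h2pos (h1sum.trans h2sum.symm)
  have hC : -chernoffInformation P1 P2 = log (chernoffCoeff P1 P2 s) := by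
    rw [chernoffInformation, neg_neg]
    congr 1
    refine IsGLB.ciInf_eq (IsLeast.isGLB ⟨⟨s, rfl⟩, ?_⟩)
    rintro _ ⟨t, rfl⟩
    exact chernoffCoeff_le_of_sum_tilted_mul_llr_eq_zero h1pos h2pos hmean t
  have h1 (x : 𝒳) : 0 ≤ P1 x := (h1pos x).le
  have h2 (x : 𝒳) : 0 ≤ P2 x := (h2pos x).le
  refine ⟨mlTest P1 P2, hC ▸ tendsto_inv_mul_log_of_le_of_le (lt_min hp0 (sub_pos.2 hp1))
    (chernoffCoeff_pos h1pos h2pos s) (V := ∑ x, tilted P1 P2 s x * llr P1 P2 x ^ 2)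
    (fun n => ?_) (fun n => ?_)⟩
  · calc _ ≤ min p (1 - p) * minOverlap P1 P2 n := by
          gcongr
          exact chernoffCoeff_pow_mul_exp_le_minOverlap h1pos h2pos hs0.le hs1.le hmean n
      _ ≤ _ := (bayesError_mlTest_mem_Icc h1 h2 hp0.le hp1.le n).1
  · exact (bayesError_mlTest_mem_Icc h1 h2 hp0.le hp1.le n).2.trans
      (minOverlap_le_chernoffCoeff_pow h1 h2 hs0.le hs1.le n)

/-- **Chernoff's theorem for map-aware fingerprinting.**  With prior `π ∈ (0,1)` on the
hypothesis `P1`, there are decision sets whose Bayes error probability decays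
exponentially with exponent exactly the Chernoff information of `P1` and `P2`. -/
theorem chernoff_fingerprinting {𝒳 : Type*} [Fintype 𝒳] (P1 P2 : 𝒳 → ℝ)
    (h1pos : ∀ x, 0 < P1 x) (h1sum : ∑ x, P1 x = 1)
    (h2pos : ∀ x, 0 < P2 x) (h2sum : ∑ x, P2 x = 1)
    (hne : P1 ≠ P2) (p : ℝ) (hp0 : 0 < p) (hp1 : p < 1) :
    ∃ A : (n : ℕ) → Set (Fin n → 𝒳),
      Tendsto (fun n : ℕ => (1 / (n : ℝ)) *
          Real.log (p * prodPMFProb P1 ((A n)ᶜ) + (1 - p) * prodPMFProb P2 (A n)))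
        atTop (nhds (-(chernoffInformation P1 P2))) :=
  chernoff_fingerprinting_general P1 P2 h1pos h1sum h2pos h2sum p hp0 hp1
end

section
/- Let D > 0, α > 0, P_T > 0, N_1 > 0 and L ≥ 0 be real numbers, and let u_1, u_2 ∈ (0, D]. If (P_T² / (2 N_1)) · (u_1^{−α} − u_2^{−α})² ≤ L, then |u_1 − u_2| ≤ (D^{α+1} / (α · P_T)) · √(2 N_1 L). (The left-hand hypothesis is exactly the Kullback–Leibler divergence D(P_{X|u_1}‖P_{X|u_2}) between the RSS fingerprint distributions at u_1 and u_2, which are Gaussian with means P_T/u_i^{α} + N and common variance N_1; so this is the spatial-robustness bound for RSS fingerprints on the interval [0, D] with an anchor at the origin.) -/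
lemma rss_key (D α : ℝ) (hD : 0 < D) (hα : 0 < α) {a b : ℝ}
    (ha : 0 < a) (hab : a ≤ b) (hbD : b ≤ D) :
    α / D ^ (α + 1) * (b - a) ≤ a ^ (-α) - b ^ (-α) := by
  rcases eq_or_lt_of_le hab with rfl | hab
  · simp
  · obtain ⟨c, hc, hderiv⟩ := exists_hasDerivAt_eq_slope
      (fun x : ℝ => x ^ (-α)) (fun x : ℝ => (-α) * x ^ (-α - 1)) hab
      (fun x hx => (Real.continuousAt_rpow_const x (-α)
        (Or.inl (lt_of_lt_of_le ha hx.1).ne')).continuousWithinAt)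
      (fun x hx => Real.hasDerivAt_rpow_const (Or.inl (ha.trans hx.1).ne'))
    have hc0 : 0 < c := ha.trans hc.1
    have hba : (0:ℝ) < b - a := sub_pos.mpr hab
    rw [eq_div_iff hba.ne'] at hderiv
    have h1 : a ^ (-α) - b ^ (-α) = α * c ^ (-(α+1)) * (b - a) := by
      rw [show -(α+1) = -α - 1 by ring]; linarith
    have hmono : D ^ (-(α+1)) ≤ c ^ (-(α+1)) :=
      Real.rpow_le_rpow_of_nonpos hc0 (hc.2.le.trans hbD) (by linarith)
    have hD' : D ^ (-(α+1)) = (D ^ (α+1))⁻¹ := Real.rpow_neg hD.le _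
    have h2 : α * D ^ (-(α+1)) * (b - a) ≤ α * c ^ (-(α+1)) * (b - a) := by
      gcongr
    rw [hD'] at h2
    calc α / D ^ (α + 1) * (b - a) = α * (D ^ (α+1))⁻¹ * (b - a) := by
          rw [div_eq_mul_inv]
      _ ≤ α * c ^ (-(α+1)) * (b - a) := h2
      _ = a ^ (-α) - b ^ (-α) := h1.symm

/-- **Spatial robustness of RSS fingerprints** (Proposition: stability bound).
If the KL divergence `(P_T²/(2N₁))·(u₁^{-α} - u₂^{-α})²` between the Gaussian RSS
fingerprint distributions at `u₁, u₂ ∈ (0, D]` is at most `L`, then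
`|u₁ - u₂| ≤ (D^{α+1}/(α P_T)) · √(2 N₁ L)`. -/
theorem rss_fingerprint_robustness (D α P_T N₁ L : ℝ)
    (hD : 0 < D) (hα : 0 < α) (hP : 0 < P_T) (hN : 0 < N₁) (hL : 0 ≤ L)
    (u₁ u₂ : ℝ) (hu₁ : u₁ ∈ Set.Ioc 0 D) (hu₂ : u₂ ∈ Set.Ioc 0 D)
    (hkl : P_T ^ 2 / (2 * N₁) * (u₁ ^ (-α) - u₂ ^ (-α)) ^ 2 ≤ L) :
    |u₁ - u₂| ≤ D ^ (α + 1) / (α * P_T) * Real.sqrt (2 * N₁ * L) := by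
  obtain ⟨h1, h1D⟩ := hu₁
  obtain ⟨h2, h2D⟩ := hu₂
  set d := u₁ ^ (-α) - u₂ ^ (-α) with hd_def
  have hsq : d ^ 2 ≤ 2 * N₁ * L / P_T ^ 2 := by
    rw [le_div_iff₀ (by positivity)]
    have h2N : (0:ℝ) < 2 * N₁ := by linarith
    rw [div_mul_eq_mul_div, div_le_iff₀ h2N] at hkl
    nlinarith
  have hdabs : |d| ≤ Real.sqrt (2 * N₁ * L) / P_T := by
    calc |d| = Real.sqrt (d ^ 2) := (Real.sqrt_sq_eq_abs d).symm
      _ ≤ Real.sqrt (2 * N₁ * L / P_T ^ 2) := Real.sqrt_le_sqrt hsq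
      _ = Real.sqrt (2 * N₁ * L) / P_T := by
          rw [Real.sqrt_div' (2 * N₁ * L) (by positivity), Real.sqrt_sq hP.le]
  have hDA : (0:ℝ) < D ^ (α + 1) := Real.rpow_pos_of_pos hD _
  have hS : (0:ℝ) ≤ Real.sqrt (2 * N₁ * L) := Real.sqrt_nonneg _
  rcases le_total u₁ u₂ with h | h
  · have hkey := rss_key D α hD hα h1 h h2D
    have h3 : α / D ^ (α+1) * (u₂ - u₁) ≤ Real.sqrt (2 * N₁ * L) / P_T :=
      hkey.trans ((le_abs_self d).trans hdabs)
    rw [div_mul_eq_mul_div, div_le_div_iff₀ hDA hP] at h3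
    rw [abs_sub_comm, abs_of_nonneg (sub_nonneg.mpr h), div_mul_eq_mul_div,
      le_div_iff₀ (by positivity)]
    nlinarith
  · have hkey := rss_key D α hD hα h2 h h1D
    have h3 : α / D ^ (α+1) * (u₁ - u₂) ≤ Real.sqrt (2 * N₁ * L) / P_T := by
      refine hkey.trans (le_trans ?_ hdabs)
      rw [hd_def, abs_sub_comm]
      exact le_abs_self _
    rw [div_mul_eq_mul_div, div_le_div_iff₀ hDA hP] at h3
    rw [abs_of_nonneg (sub_nonneg.mpr h), div_mul_eq_mul_div,
      le_div_iff₀ (by positivity)]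
    nlinarith
end

section
/- Let w_1, w_2, w_3 ∈ ℝ² be non-collinear (affinely independent) anchor locations, let P_1, P_2, P_3 > 0, N_1, N_2, N_3 > 0 and α > 0, and let u_1, u_2 ∈ ℝ² with u_i ≠ w_j for all i, j. If Σ_{j=1}^{3} (P_j² / (2 N_j)) · ( ‖w_j − u_1‖^{−α} − ‖w_j − u_2‖^{−α} )² = 0 (i.e. the Kullback–Leibler divergence between the Gaussian fingerprint distributions at u_1 and u_2 vanishes), then ‖w_j − u_1‖ = ‖w_j − u_2‖ for j = 1, 2, 3, and consequently u_1 = u_2. -/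
/-- **Three non-collinear anchors identify the location.**  If the KL divergence
`Σ_j (P j)²/(2 N j) · (‖w j - u₁‖^{-α} - ‖w j - u₂‖^{-α})²` between the Gaussian
fingerprint distributions at `u₁` and `u₂` vanishes for three affinely independent
anchors, then all three anchor distances agree and `u₁ = u₂`. -/
theorem three_anchors_identify (w : Fin 3 → EuclideanSpace ℝ (Fin 2))
    (hw : AffineIndependent ℝ w)
    (P : Fin 3 → ℝ) (hP : ∀ j, 0 < P j) (N : Fin 3 → ℝ) (hN : ∀ j, 0 < N j)
    (α : ℝ) (hα : 0 < α) (u₁ u₂ : EuclideanSpace ℝ (Fin 2))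
    (h1 : ∀ j, u₁ ≠ w j) (h2 : ∀ j, u₂ ≠ w j)
    (hkl : ∑ j, P j ^ 2 / (2 * N j) *
        (‖w j - u₁‖ ^ (-α) - ‖w j - u₂‖ ^ (-α)) ^ 2 = 0) :
    (∀ j, ‖w j - u₁‖ = ‖w j - u₂‖) ∧ u₁ = u₂ := by
  have hterm : ∀ j ∈ Finset.univ, (0:ℝ) ≤ P j ^ 2 / (2 * N j) *
      (‖w j - u₁‖ ^ (-α) - ‖w j - u₂‖ ^ (-α)) ^ 2 := by
    intro j _
    have := (hN j).le
    positivity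
  have hz := (Finset.sum_eq_zero_iff_of_nonneg hterm).mp hkl
  have hnorm : ∀ j, ‖w j - u₁‖ = ‖w j - u₂‖ := by
    intro j
    have hj := hz j (Finset.mem_univ j)
    have hco : 0 < P j ^ 2 / (2 * N j) := by
      have := hP j; have := hN j; positivity
    have hsq : (‖w j - u₁‖ ^ (-α) - ‖w j - u₂‖ ^ (-α)) ^ 2 = 0 := by
      rcases mul_eq_zero.mp hj with h | h
      · exact absurd h hco.ne'
      · exact h
    have heq : ‖w j - u₁‖ ^ (-α) = ‖w j - u₂‖ ^ (-α) := by
      have := pow_eq_zero_iff (n := 2) (by norm_num) |>.mp hsq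
      linarith
    exact Real.rpow_left_injOn (x := -α) (by simpa using hα.ne')
      (Set.mem_setOf.mpr (norm_nonneg _)) (Set.mem_setOf.mpr (norm_nonneg _)) heq
  refine ⟨hnorm, ?_⟩
  by_contra hne
  have hmem : ∀ j, w j ∈ AffineSubspace.perpBisector u₁ u₂ := by
    intro j
    rw [AffineSubspace.mem_perpBisector_iff_dist_eq]
    simpa [dist_eq_norm, norm_sub_rev] using hnorm j
  have hspan : affineSpan ℝ (Set.range w) = ⊤ := by
    rw [hw.affineSpan_eq_top_iff_card_eq_finrank_add_one]
    simp [finrank_euclideanSpace]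
  have hle : affineSpan ℝ (Set.range w) ≤ AffineSubspace.perpBisector u₁ u₂ :=
    affineSpan_le.mpr (Set.range_subset_iff.mpr hmem)
  rw [hspan, top_le_iff] at hle
  have : u₁ ∈ AffineSubspace.perpBisector u₁ u₂ := hle ▸ AffineSubspace.mem_top ℝ _ _
  rw [AffineSubspace.mem_perpBisector_iff_dist_eq] at this
  simp at this
  exact hne this
end
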